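/- arXiv:1401.5767 — 3 statements merged into one kernel-verified Lean document; each statement's English description precedes it below -/
import Mathlib

section
/- Fix c ≥ 0. For E ∈ (0,1) with E·log(1/E) < 1, define b(E) := ⌊1/(E·log(1/E))⌋, η(E) := b(E)·E, p0(E) := e^{−(b(E)−1)cE} − e^{−η(E)−b(E)·cE}, p1(E) := e^{−η(E)−(b(E)−1)cE} − e^{−η(E)−b(E)·cE}, and F_c(E) := (1/η(E))·[ p0(E)·log(b(E)·p0(E)/(p0(E)+(b(E)−1)·p1(E))) + (b(E)−1)·p1(E)·log(b(E)·p1(E)/(p0(E)+(b(E)−1)·p1(E))) ]. Then liminf_{E→0^+} ( F_c(E) − log(1/E) + log log(1/E) ) ≥ −c − log(1+c) − 3/2. -/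
/-!
Write `L = log (1 / E)`, `b = ⌊1 / (E L)⌋` and `η = b E`, so that `η L → 1` and
`log b = L - log L + log (η L)`. In terms of `x = p₀ / η`, `y = p₁ / E` and
`S = x + (1 - 1 / b) y` the efficiency is `x log b + x log x + (1 - 1 / b) y log y - S log S`.
Since `p₀ = e^{-c (η - E)} - e^{-(1 + c) η}`, a second-order expansion of the exponentials gives
`L (x - 1) → -(c + 1 / 2)`, while `y → c`. Hence `F_c(E) - L + log L` converges to
`-(c + 1 / 2) + c log c - (1 + c) log (1 + c)`, and `c log (c / (1 + c)) ≥ c - (1 + c) = -1`.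
-/

/-- Photon efficiency achieved by simple PPM with frame length `⌊1/(E log(1/E))⌋`
and pulse amplitude `b·E` on the Poisson channel with dark current `c·E`. -/
noncomputable def simplePPMEfficiency (c E : ℝ) : ℝ :=
  let b : ℕ := ⌊1 / (E * Real.log (1 / E))⌋₊
  let η : ℝ := (b : ℝ) * E
  let p0 : ℝ := Real.exp (-(((b : ℝ) - 1) * c * E)) - Real.exp (-η - (b : ℝ) * c * E)
  let p1 : ℝ := Real.exp (-η - ((b : ℝ) - 1) * c * E) - Real.exp (-η - (b : ℝ) * c * E)
  (1 / η) * (p0 * Real.log ((b : ℝ) * p0 / (p0 + ((b : ℝ) - 1) * p1))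
      + ((b : ℝ) - 1) * p1 * Real.log ((b : ℝ) * p1 / (p0 + ((b : ℝ) - 1) * p1)))

open Filter Real Topology Asymptotics

section ExpTaylor

variable {α : Type*} {l : Filter α} {f g : α → ℝ} {a : ℝ}

theorem tendsto_mul_exp_sub_sum_range (n : ℕ) (hf : Tendsto f l (𝓝 0))
    (hg : Tendsto (fun x => g x * f x ^ n) l (𝓝 a)) :
    Tendsto (fun x => g x * (exp (f x) - ∑ i ∈ Finset.range (n + 1), f x ^ i / i.factorial))
      l (𝓝 0) :=
  (isLittleO_one_iff ℝ).1 <| ((isBigO_refl g l).mul_isLittleO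
    ((exp_sub_sum_range_succ_isLittleO_pow n).comp_tendsto hf)).trans_isBigO (hg.isBigO_one ℝ)

theorem tendsto_mul_exp_sub_one (hf : Tendsto f l (𝓝 0))
    (hg : Tendsto (fun x => g x * f x) l (𝓝 a)) :
    Tendsto (fun x => g x * (exp (f x) - 1)) l (𝓝 a) := by
  have h := (tendsto_mul_exp_sub_sum_range 1 hf (by simpa using hg)).add hg
  norm_num [Finset.sum_range_succ] at h
  convert h using 2
  ring

theorem tendsto_mul_exp_sub_one_sub (hf : Tendsto f l (𝓝 0))
    (hg : Tendsto (fun x => g x * f x ^ 2) l (𝓝 a)) :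
    Tendsto (fun x => g x * (exp (f x) - 1 - f x)) l (𝓝 (a / 2)) := by
  have h := (tendsto_mul_exp_sub_sum_range 2 hf hg).add (hg.div_const 2)
  norm_num [Finset.sum_range_succ] at h
  convert h using 2
  ring

end ExpTaylor

theorem Real.mul_log_div {x y : ℝ} (hy : y ≠ 0) : x * log (x / y) = x * log x - x * log y := by
  rcases eq_or_ne x 0 with rfl | hx
  · simp
  · rw [log_div hx hy, mul_sub]

theorem Real.sub_le_mul_log_div {p q : ℝ} (hp : 0 ≤ p) (hq : 0 < q) :
    p - q ≤ p * log (p / q) := by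
  rcases hp.eq_or_lt with rfl | hp
  · simp [hq.le]
  · have h := mul_le_mul_of_nonneg_left (one_sub_inv_le_log_of_pos (div_pos hp hq)) hp.le
    rwa [inv_div, mul_sub, mul_one, mul_div_cancel₀ _ hp.ne'] at h

namespace SimplePPM

noncomputable def frameLength (E : ℝ) : ℕ := ⌊1 / (E * log (1 / E))⌋₊

noncomputable def amplitude (E : ℝ) : ℝ := frameLength E * E

theorem tendsto_log_one_div : Tendsto (fun E : ℝ => log (1 / E)) (𝓝[>] 0) atTop := by
  simpa using tendsto_log_nhdsGT_zero

theorem tendsto_mul_log_one_div_pow (n : ℕ) :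
    Tendsto (fun E : ℝ => E * log (1 / E) ^ n) (𝓝[>] 0) (𝓝 0) := by
  refine ((tendsto_pow_mul_exp_neg_atTop_nhds_zero n).comp tendsto_log_one_div).congr' ?_
  filter_upwards [self_mem_nhdsWithin] with E (hE : 0 < E)
  simp [log_inv, exp_log hE, mul_comm]

theorem tendsto_one_div_mul_log_one_div :
    Tendsto (fun E => 1 / (E * log (1 / E))) (𝓝[>] 0) atTop := by
  have hpos : ∀ᶠ E in 𝓝[>] (0 : ℝ), 0 < E * log (1 / E) := by
    filter_upwards [self_mem_nhdsWithin, tendsto_log_one_div.eventually_gt_atTop 0]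
      with E hE hL using mul_pos hE hL
  exact (tendsto_nhdsWithin_iff.2 ⟨by simpa only [pow_one] using tendsto_mul_log_one_div_pow 1,
    hpos⟩).inv_tendsto_nhdsGT_zero.congr fun E => (one_div _).symm

theorem tendsto_frameLength : Tendsto (fun E => (frameLength E : ℝ)) (𝓝[>] 0) atTop :=
  tendsto_natCast_atTop_atTop.comp (tendsto_nat_floor_atTop.comp tendsto_one_div_mul_log_one_div)

theorem tendsto_amplitude_mul_log :
    Tendsto (fun E => amplitude E * log (1 / E)) (𝓝[>] 0) (𝓝 1) :=
  (tendsto_nat_floor_div_atTop.comp tendsto_one_div_mul_log_one_div).congr fun E => by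
    simp only [Function.comp, amplitude, frameLength, div_div_eq_mul_div, div_one, mul_assoc]

theorem tendsto_amplitude : Tendsto amplitude (𝓝[>] 0) (𝓝 0) := by
  have h : Tendsto (fun E => amplitude E * log (1 / E) * (log (1 / E))⁻¹) (𝓝[>] 0) (𝓝 0) := by
    simpa using tendsto_amplitude_mul_log.mul tendsto_log_one_div.inv_tendsto_atTop
  refine h.congr' ?_
  filter_upwards [tendsto_log_one_div.eventually_gt_atTop 0] with E hL
  field_simp

theorem tendsto_log_one_div_div_frameLength :
    Tendsto (fun E => log (1 / E) / frameLength E) (𝓝[>] 0) (𝓝 0) := by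
  have h : Tendsto (fun E => E * log (1 / E) ^ 2 * (amplitude E * log (1 / E))⁻¹)
      (𝓝[>] 0) (𝓝 0) := by
    simpa using
      (tendsto_mul_log_one_div_pow 2).mul (tendsto_amplitude_mul_log.inv₀ one_ne_zero)
  refine h.congr' ?_
  filter_upwards [self_mem_nhdsWithin, tendsto_log_one_div.eventually_gt_atTop 0]
    with E (hE : 0 < E) hL
  simp only [amplitude]
  field_simp

theorem tendsto_log_frameLength_div :
    Tendsto (fun E => log (frameLength E) / log (1 / E)) (𝓝[>] 0) (𝓝 1) := by
  have h : Tendsto (fun E => 1 + ((log (1 / E))⁻¹ * log (amplitude E * log (1 / E))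
      - log (log (1 / E)) / log (1 / E))) (𝓝[>] 0) (𝓝 1) := by
    simpa using ((tendsto_log_one_div.inv_tendsto_atTop.mul
      ((continuousAt_log one_ne_zero).tendsto.comp tendsto_amplitude_mul_log)).sub
      (isLittleO_log_id_atTop.tendsto_div_nhds_zero.comp tendsto_log_one_div)).const_add 1
  refine h.congr' ?_
  filter_upwards [self_mem_nhdsWithin, tendsto_log_one_div.eventually_gt_atTop 0,
    tendsto_frameLength.eventually_gt_atTop 0] with E (hE : 0 < E) hL hb
  have hlogE : log E = -log (1 / E) := by rw [one_div, log_inv, neg_neg]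
  rw [amplitude, log_mul (by positivity) hL.ne', log_mul hb.ne' hE.ne', hlogE]
  field_simp
  ring

noncomputable def p0 (c E : ℝ) : ℝ :=
  exp (-(c * (amplitude E - E))) - exp (-((1 + c) * amplitude E))

noncomputable def p1 (c E : ℝ) : ℝ :=
  exp (-((1 + c) * amplitude E)) * (exp (c * E) - 1)

noncomputable def ppmEfficiency (b E p₀ p₁ : ℝ) : ℝ :=
  1 / (b * E) * (p₀ * log (b * p₀ / (p₀ + (b - 1) * p₁))
    + (b - 1) * p₁ * log (b * p₁ / (p₀ + (b - 1) * p₁)))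

theorem simplePPMEfficiency_eq (c E : ℝ) :
    simplePPMEfficiency c E = ppmEfficiency (frameLength E) E (p0 c E) (p1 c E) := by
  have h₀ : p0 c E = exp (-((frameLength E - 1) * c * E))
      - exp (-amplitude E - frameLength E * c * E) := by
    rw [p0, amplitude]; ring_nf
  have h₁ : p1 c E = exp (-amplitude E - (frameLength E - 1) * c * E)
      - exp (-amplitude E - frameLength E * c * E) := by
    rw [p1, amplitude, mul_sub, ← exp_add]; ring_nf
  rw [h₀, h₁]
  rfl

theorem tendsto_p1_div_self (c : ℝ) : Tendsto (fun E => p1 c E / E) (𝓝[>] 0) (𝓝 c) := by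
  have hexp : Tendsto (fun E => exp (-((1 + c) * amplitude E))) (𝓝[>] 0) (𝓝 1) := by
    simpa using (tendsto_amplitude.const_mul (1 + c)).neg.rexp
  have hslope : Tendsto (fun E => E⁻¹ * (exp (c * E) - 1)) (𝓝[>] 0) (𝓝 c) := by
    refine tendsto_mul_exp_sub_one (by simpa using
      ((continuous_const_mul c).tendsto 0).mono_left nhdsWithin_le_nhds)
      (tendsto_const_nhds.congr' ?_)
    filter_upwards [self_mem_nhdsWithin] with E (hE : 0 < E)
    field_simp
  have h := hexp.mul hslope
  rw [one_mul] at h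
  exact h.congr fun E => by rw [p1]; ring

-- With `t = c (η - E)` and `u = (1 + c) η`, `p₀ - η = (e⁻ᵗ - 1 + t) - (e⁻ᵘ - 1 + u) + c E`,
-- where `(L / η) t² → c²`, `(L / η) u² → (1 + c)²` and `(L / η) c E = c L / b → 0`.
theorem tendsto_log_mul_p0_div_sub_one (c : ℝ) :
    Tendsto (fun E => log (1 / E) * (p0 c E / amplitude E - 1)) (𝓝[>] 0)
      (𝓝 (-(c + 1 / 2))) := by
  set g := fun E => log (1 / E) / amplitude E
  have ht : Tendsto (fun E => g E * (-(c * (amplitude E - E))) ^ 2) (𝓝[>] 0) (𝓝 (c ^ 2)) := by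
    have h : Tendsto (fun E => c ^ 2 * (amplitude E * log (1 / E)
        * (1 - (frameLength E : ℝ)⁻¹) ^ 2)) (𝓝[>] 0) (𝓝 (c ^ 2)) := by
      simpa using (tendsto_amplitude_mul_log.mul (((tendsto_const_nhds (x := (1 : ℝ))).sub
        tendsto_frameLength.inv_tendsto_atTop).pow 2)).const_mul (c ^ 2)
    refine h.congr' ?_
    filter_upwards [self_mem_nhdsWithin, tendsto_frameLength.eventually_gt_atTop 0]
      with E (hE : 0 < E) hb
    simp only [g, amplitude]
    field_simp
  have hu : Tendsto (fun E => g E * (-((1 + c) * amplitude E)) ^ 2) (𝓝[>] 0)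
      (𝓝 ((1 + c) ^ 2)) := by
    have h : Tendsto (fun E => (1 + c) ^ 2 * (amplitude E * log (1 / E))) (𝓝[>] 0)
        (𝓝 ((1 + c) ^ 2)) := by
      simpa using tendsto_amplitude_mul_log.const_mul ((1 + c) ^ 2)
    refine h.congr' ?_
    filter_upwards [self_mem_nhdsWithin, tendsto_frameLength.eventually_gt_atTop 0]
      with E (hE : 0 < E) hb
    simp only [g, amplitude]
    field_simp
  have hexp_t := tendsto_mul_exp_sub_one_sub (by simpa using
    ((tendsto_amplitude.sub (tendsto_id.mono_left nhdsWithin_le_nhds)).const_mul c).neg) ht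
  have hexp_u := tendsto_mul_exp_sub_one_sub (by simpa using
    (tendsto_amplitude.const_mul (1 + c)).neg) hu
  have h := (hexp_t.sub hexp_u).add (tendsto_log_one_div_div_frameLength.const_mul c)
  rw [show c ^ 2 / 2 - (1 + c) ^ 2 / 2 + c * 0 = -(c + 1 / 2) by ring] at h
  refine h.congr' ?_
  filter_upwards [self_mem_nhdsWithin, tendsto_frameLength.eventually_gt_atTop 0]
    with E (hE : 0 < E) hb
  simp only [g, p0, amplitude]
  field_simp
  ring

theorem tendsto_p0_div_amplitude (c : ℝ) :
    Tendsto (fun E => p0 c E / amplitude E) (𝓝[>] 0) (𝓝 1) := by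
  have h := (tendsto_log_one_div.inv_tendsto_atTop.mul
    (tendsto_log_mul_p0_div_sub_one c)).const_add 1
  rw [zero_mul, add_zero] at h
  refine h.congr' ?_
  filter_upwards [tendsto_log_one_div.eventually_gt_atTop 0] with E hL
  simp only [Pi.inv_apply]
  field_simp
  ring

theorem ppmEfficiency_mul {b E x y : ℝ} (hb : b ≠ 0) (hE : E ≠ 0) (hx : x ≠ 0)
    (hS : x + (1 - b⁻¹) * y ≠ 0) :
    ppmEfficiency b E (b * E * x) (E * y) = x * log b + x * log x + (1 - b⁻¹) * (y * log y)
      - (x + (1 - b⁻¹) * y) * log (x + (1 - b⁻¹) * y) := by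
  set S := x + (1 - b⁻¹) * y
  have hs : b * E * x + (b - 1) * (E * y) = b * E * S := by
    simp only [S]; field_simp
  have h₀ : b * (b * E * x) / (b * E * S) = b * x / S := by field_simp
  have h₁ : b * (E * y) / (b * E * S) = y / S := by field_simp
  have hη : 1 / (b * E) * (b * E * x * log (b * x / S) + (b - 1) * (E * y) * log (y / S))
      = x * log (b * x / S) + (1 - b⁻¹) * (y * log (y / S)) := by
    field_simp
  rw [ppmEfficiency, hs, h₀, h₁, hη, log_div (mul_ne_zero hb hx) hS, log_mul hb hx,
    mul_log_div hS]
  ring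

theorem tendsto_simplePPMEfficiency_sub {c : ℝ} (hc : 0 ≤ c) :
    Tendsto (fun E => simplePPMEfficiency c E - log (1 / E) + log (log (1 / E))) (𝓝[>] 0)
      (𝓝 (-(c + 1 / 2) + c * log c - (1 + c) * log (1 + c))) := by
  set x := fun E => p0 c E / amplitude E
  set y := fun E => p1 c E / E
  set S := fun E => x E + (1 - (frameLength E : ℝ)⁻¹) * y E
  have hLx : Tendsto (fun E => log (1 / E) * (x E - 1)) (𝓝[>] 0) (𝓝 (-(c + 1 / 2))) :=
    tendsto_log_mul_p0_div_sub_one c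
  have hx : Tendsto x (𝓝[>] 0) (𝓝 1) := tendsto_p0_div_amplitude c
  have hy : Tendsto y (𝓝[>] 0) (𝓝 c) := tendsto_p1_div_self c
  have hS : Tendsto S (𝓝[>] 0) (𝓝 (1 + c)) := by
    simpa using hx.add (((tendsto_const_nhds (x := (1 : ℝ))).sub
      tendsto_frameLength.inv_tendsto_atTop).mul hy)
  have h := ((((continuousAt_log one_ne_zero).tendsto.comp tendsto_amplitude_mul_log).add
    (hLx.mul tendsto_log_frameLength_div)).add (continuous_mul_log.tendsto _ |>.comp hx)).add
    ((((tendsto_const_nhds (x := (1 : ℝ))).sub tendsto_frameLength.inv_tendsto_atTop).mul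
      (continuous_mul_log.tendsto _ |>.comp hy)).sub (continuous_mul_log.tendsto _ |>.comp hS))
  simp only [log_one, Function.comp_def, Pi.inv_apply] at h
  rw [show 0 + -(c + 1 / 2) * 1 + 1 * 0 + ((1 - 0) * (c * log c) - (1 + c) * log (1 + c))
    = -(c + 1 / 2) + c * log c - (1 + c) * log (1 + c) by ring] at h
  refine h.congr' ?_
  filter_upwards [self_mem_nhdsWithin, tendsto_frameLength.eventually_gt_atTop 0,
    tendsto_log_one_div.eventually_gt_atTop 0, hx.eventually_ne one_ne_zero,
    hS.eventually_ne (show 1 + c ≠ 0 by linarith)] with E (hE : 0 < E) hb hL hx0 hS0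
  have hp0 : p0 c E = frameLength E * E * x E := by
    simp only [x, amplitude]; field_simp
  have hp1 : p1 c E = E * y E := by
    simp only [y]; field_simp
  have hlogE : log E = -log (1 / E) := by rw [one_div, log_inv, neg_neg]
  have hcancel : log (1 / E) * (x E - 1) * (log (frameLength E) / log (1 / E))
      = (x E - 1) * log (frameLength E) := by
    field_simp
  rw [simplePPMEfficiency_eq, hp0, hp1, ppmEfficiency_mul hb.ne' hE.ne' hx0 hS0, amplitude,
    log_mul (by positivity) hL.ne', log_mul hb.ne' hE.ne', hlogE, hcancel]
  ring

end SimplePPM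

/-- Asymptotic lower bound on the photon efficiency of simple PPM. -/
theorem stmt_3 (c : ℝ) (hc : 0 ≤ c) :
    Filter.liminf
        (fun E : ℝ =>
          simplePPMEfficiency c E - Real.log (1 / E) + Real.log (Real.log (1 / E)))
        (nhdsWithin 0 (Set.Ioi 0))
      ≥ -c - Real.log (1 + c) - 3 / 2 := by
  rw [ge_iff_le, (SimplePPM.tendsto_simplePPMEfficiency_sub hc).liminf_eq]
  have h := sub_le_mul_log_div hc (by linarith : (0 : ℝ) < 1 + c)
  rw [mul_log_div (by linarith)] at h
  linarith
end

section
/- Let c ≥ 0 and E ∈ (0,1) satisfy E·log(1/E) < 1 and E < e^{−c}. Set b := ⌊1/(E·log(1/E))⌋, η := b·E, p0 := e^{−(b−1)cE} − e^{−η−b·cE}, p1 := e^{−η−(b−1)cE} − e^{−η−b·cE}, p2 := (1 − e^{−η−cE})·(1 − e^{−cE})·e^{−(b−2)cE}, and p3 := e^{−η−cE}·(1 − e^{−cE})²·e^{−(b−3)cE}. Then (1/η)·[ p0·log(b·p0/(p0+(b−1)·p1)) + (b−1)·p1·log(b·p1/(p0+(b−1)·p1)) + (b−1)·p2·log(b·p2/(2·p2+(b−2)·p3))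 + ((b−1)(b−2)/2)·p3·log(b·p3/(2·p2+(b−2)·p3)) ] ≥ (1−η/2)·log b − c·η·log b − (1 + cE/η)·log(1+c) + (1 + cE/η)·( log(1−c·η) + log(1−η/2) ) − 1 − cE/η + (1−η/2)·(b−1)·(c·E − c²·E²/2)·(1−c·η)·log(b/2) − (c²/2)·η − c·(η + c·E). -/
/-!
Multiply through by `η` and treat the single-detection terms `p0, p1` and the double-detection
terms `p2, p3` separately. In each pair, `log z ≥ 1 - 1/z` bounds the sum of `x log (y / s)`
from below by `p0 (log b - log (1 + c) - 1)` and `(b-1) p2 log (b/2) - (b-1)(b-2)/(2b) (2 p2 + (b-2) p3)`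
respectively. The exponentials in the `pᵢ` are then squeezed by `1 - y ≤ e^{-y} ≤ 1 - y + y²/2`,
using `b E = η` and `c η < 1`; the latter holds because `c < log (1/E)` and
`b ≤ 1 / (E log (1/E))`.
-/

open Real

lemma sub_le_mul_log_div {x y s : ℝ} (hx : 0 ≤ x) (hxy : x ≤ y) (hs : 0 < s) :
    x - s ≤ x * log (y / s) := by
  rcases hx.eq_or_lt with rfl | hx
  · simpa using hs.le
  calc x - s = x * (1 - (x / s)⁻¹) := by field_simp
    _ ≤ x * log (x / s) := by
      gcongr
      exact one_sub_inv_le_log_of_pos (by positivity)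
    _ ≤ x * log (y / s) := by gcongr

lemma one_sub_exp_neg_le (y : ℝ) : 1 - exp (-y) ≤ y := by
  linarith [add_one_le_exp (-y)]

lemma sub_sq_div_two_le_one_sub_exp_neg {y : ℝ} (hy : 0 ≤ y) :
    y - y ^ 2 / 2 ≤ 1 - exp (-y) := by
  have hq : 0 < 1 + y + y ^ 2 / 2 := by positivity
  have hexp : exp (-y) ≤ (1 + y + y ^ 2 / 2)⁻¹ := by
    rw [exp_neg]
    exact inv_anti₀ hq (quadratic_le_exp_of_nonneg hy)
  -- `(1 + y + y²/2) (1 - y + y²/2) = 1 + y⁴/4`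
  have hinv : (1 + y + y ^ 2 / 2)⁻¹ ≤ 1 - y + y ^ 2 / 2 := by
    rw [inv_le_iff_one_le_mul₀' hq]
    nlinarith [pow_nonneg hy 4]
  linarith

lemma mul_exp_neg_le_one_sub_exp_neg (y : ℝ) : y * exp (-y) ≤ 1 - exp (-y) := by
  have h := mul_le_mul_of_nonneg_right (add_one_le_exp y) (exp_pos (-y)).le
  rw [← exp_add, add_neg_cancel, exp_zero] at h
  linarith

lemma log_one_sub_nonpos {t : ℝ} (ht0 : 0 ≤ t) (ht2 : t ≤ 2) : log (1 - t) ≤ 0 := by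
  rw [← log_abs]
  exact log_nonpos (abs_nonneg _) (abs_le.2 ⟨by linarith, by linarith⟩)

lemma log_one_sub_le_sub_two {t : ℝ} (ht : 1 < t) : log (1 - t) ≤ t - 2 := by
  rw [← log_neg_eq_log, neg_sub]
  linarith [log_le_sub_one_of_pos (sub_pos.2 ht)]

lemma mul_log_one_div_le_half {E : ℝ} (hE : 0 < E) : E * log (1 / E) ≤ 1 / 2 := by
  have hlog : log (1 / E) ≤ 1 / E / exp 1 := by
    have h := log_le_sub_one_of_pos (show 0 < 1 / E / exp 1 by positivity)
    rw [log_div (by positivity) (exp_pos 1).ne', log_exp] at h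
    linarith
  have he : 2 ≤ exp 1 := by linarith [add_one_le_exp 1]
  calc E * log (1 / E) ≤ E * (1 / E / exp 1) := by gcongr
    _ = 1 / exp 1 := by field_simp
    _ ≤ 1 / 2 := by gcongr

lemma two_le_floor_one_div_mul_log {E : ℝ} (hE0 : 0 < E) (hE1 : E < 1) :
    2 ≤ ⌊1 / (E * log (1 / E))⌋₊ := by
  have hpos : 0 < E * log (1 / E) := mul_pos hE0 (log_pos (one_lt_one_div hE0 hE1))
  apply Nat.le_floor
  rw [le_div_iff₀ hpos]
  push_cast
  linarith [mul_log_one_div_le_half hE0]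

lemma mul_mul_lt_one_of_le_one_div_mul_log {b c E : ℝ} (hb : 0 < b) (hE : 0 < E)
    (hcE : E < exp (-c)) (hbE : b ≤ 1 / (E * log (1 / E))) : c * (b * E) < 1 := by
  have hc : c < log (1 / E) := by
    rw [one_div, log_inv, lt_neg]
    simpa using log_lt_log hE hcE
  have hL : 0 < log (1 / E) := pos_of_mul_pos_right (one_div_pos.1 (hb.trans_le hbE)) hE.le
  calc c * (b * E) < log (1 / E) * (b * E) := by gcongr
    _ ≤ log (1 / E) * (1 / (E * log (1 / E)) * E) := by gcongr
    _ = 1 := by field_simp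

lemma log_sub_log_sub_one_le_mul_log_add_mul_log {b c p0 p1 : ℝ} (hb : 1 ≤ b) (hc : 0 ≤ c)
    (hp0 : 0 < p0) (hp1 : 0 ≤ p1) (h : (b - 1) * p1 ≤ c * p0) :
    p0 * (log b - log (1 + c) - 1)
      ≤ p0 * log (b * p0 / (p0 + (b - 1) * p1))
        + (b - 1) * p1 * log (b * p1 / (p0 + (b - 1) * p1)) := by
  set s := p0 + (b - 1) * p1
  have hq : 0 ≤ (b - 1) * p1 := mul_nonneg (by linarith) hp1
  have hs : 0 < s := by positivity
  have hfirst : log b - log (1 + c) ≤ log (b * p0 / s) := by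
    rw [← log_div (by positivity) (by positivity)]
    refine log_le_log (by positivity) ?_
    rw [div_le_div_iff₀ (by positivity) hs]
    nlinarith
  have hsecond := sub_le_mul_log_div (y := b * p1) hq (by linarith) hs
  nlinarith

lemma mul_log_div_two_sub_le {b p2 p3 : ℝ} (hb : 2 ≤ b) (hp2 : 0 < p2) (hp3 : 0 ≤ p3) :
    (b - 1) * p2 * log (b / 2) - (b - 1) * (b - 2) / (2 * b) * (2 * p2 + (b - 2) * p3)
      ≤ (b - 1) * p2 * log (b * p2 / (2 * p2 + (b - 2) * p3))
        + (b - 1) * (b - 2) / 2 * p3 * log (b * p3 / (2 * p2 + (b - 2) * p3)) := by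
  set t := 2 * p2 + (b - 2) * p3
  have hb0 : 0 < b := by linarith
  have ht : 0 < t := by nlinarith
  have hsplit : log (b * p2 / t) = log (b / 2) + log (2 * p2 / t) := by
    rw [← log_mul (by positivity) (by positivity)]
    congr 1
    field_simp
  have h2 := mul_le_mul_of_nonneg_left
    (sub_le_mul_log_div (x := 2 * p2) (by positivity) le_rfl ht) (by linarith : 0 ≤ (b - 1) / 2)
  have h3 := mul_le_mul_of_nonneg_left
    (sub_le_mul_log_div (x := b * p3) (by positivity) le_rfl ht)
    (div_nonneg (mul_nonneg (by linarith) (by linarith)) (by positivity) :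
      0 ≤ (b - 1) * (b - 2) / (2 * b))
  have e3 : (b - 1) * (b - 2) / (2 * b) * (b * p3 * log (b * p3 / t))
      = (b - 1) * (b - 2) / 2 * p3 * log (b * p3 / t) := by
    field_simp
  have e3' : (b - 1) * (b - 2) / (2 * b) * (b * p3 - t)
      = (b - 1) * (b - 2) / 2 * p3 - (b - 1) * (b - 2) / (2 * b) * t := by
    field_simp
  rw [hsplit]
  linarith

lemma le_mul_log_sub_log_sub_one {b c d η p0 : ℝ} (hb : 1 ≤ b) (hηb : η ≤ b) (hc : 0 ≤ c)
    (hd0 : 0 ≤ d) (hd1 : d ≤ 1) (hη : 0 < η) (hcη : c * η < 1)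
    (hp0 : 0 ≤ p0) (hlow : (1 - c * η) * (η - η ^ 2 / 2) ≤ p0) (hup : p0 ≤ η + d) :
    (η - η ^ 2 / 2 - c * η ^ 2) * log b - (η + d) * log (1 + c)
        + (η + d) * (log (1 - c * η) + log (1 - η / 2)) - (η + d)
      ≤ p0 * (log b - log (1 + c) - 1) := by
  have hLb : 0 ≤ log b := log_nonneg hb
  have hLc : 0 ≤ log (1 + c) := log_nonneg (by linarith)
  have hLcη : log (1 - c * η) ≤ 0 := log_one_sub_nonpos (by positivity) (by linarith)
  have hrest : p0 * (log (1 + c) + 1) ≤ (η + d) * (log (1 + c) + 1) := by gcongr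
  rcases le_or_gt η 4 with hη4 | hη4
  · have hLη : log (1 - η / 2) ≤ 0 := log_one_sub_nonpos (by positivity) (by linarith)
    have hmain : η - η ^ 2 / 2 - c * η ^ 2 ≤ p0 := by
      nlinarith [mul_nonneg hc (pow_nonneg hη.le 3)]
    have := mul_le_mul_of_nonneg_right hmain hLb
    nlinarith [mul_nonneg (by linarith : 0 ≤ η + d)
      (by linarith : 0 ≤ -(log (1 - c * η) + log (1 - η / 2)))]
  · -- for `η > 4` the junk value `log (1 - η / 2) = log (η / 2 - 1)` is positive
    have hLη : log (1 - η / 2) ≤ η / 2 - 2 := log_one_sub_le_sub_two (by linarith)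
    have hLb1 : 1 ≤ log b := by
      rw [le_log_iff_exp_le (by linarith)]
      linarith [exp_one_lt_d9]
    have h1 : (η + d) * log (1 - η / 2) ≤ (η + 1) * (η / 2 - 2) :=
      calc (η + d) * log (1 - η / 2) ≤ (η + d) * (η / 2 - 2) := by gcongr
        _ ≤ (η + 1) * (η / 2 - 2) := by gcongr; linarith
    have h2 : η ^ 2 / 2 - η ≤ (η ^ 2 / 2 - η) * log b :=
      le_mul_of_one_le_right (by nlinarith) hLb1
    nlinarith [mul_nonneg hp0 hLb, mul_nonneg (mul_nonneg hc (sq_nonneg η)) hLb,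
      mul_nonneg (by linarith : 0 ≤ η + d) (neg_nonneg.2 hLcη)]

namespace SoftPPM

-- The lemma names `p0_le`, `le_p2`, ... refer to the expressions `p0`, ..., `p3` of the statement.

variable {b c E η : ℝ}

lemma p0_eq : exp (-((b - 1) * c * E)) - exp (-η - b * c * E)
    = exp (-((b - 1) * c * E)) * (1 - exp (-(η + c * E))) := by
  rw [mul_sub, mul_one, ← exp_add]
  ring_nf

lemma p1_eq : exp (-η - (b - 1) * c * E) - exp (-η - b * c * E)
    = exp (-((b - 1) * c * E)) * (exp (-η) * (1 - exp (-(c * E)))) := by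
  simp only [mul_sub, mul_one, ← exp_add]
  ring_nf

lemma p0_pos (hc : 0 ≤ c) (hE : 0 ≤ E) (hη : 0 < η) :
    0 < exp (-((b - 1) * c * E)) - exp (-η - b * c * E) := by
  rw [p0_eq]
  have : exp (-(η + c * E)) < 1 := exp_lt_one_iff.2 (by nlinarith)
  exact mul_pos (exp_pos _) (by linarith)

lemma p0_le (hb : 1 ≤ b) (hc : 0 ≤ c) (hE : 0 ≤ E) (hη : 0 ≤ η) :
    exp (-((b - 1) * c * E)) - exp (-η - b * c * E) ≤ η + c * E := by
  rw [p0_eq]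
  have hA : exp (-((b - 1) * c * E)) ≤ 1 := exp_le_one_iff.2 (by nlinarith [mul_nonneg hc hE])
  have hpx : 0 ≤ 1 - exp (-(η + c * E)) :=
    sub_nonneg.2 (exp_le_one_iff.2 (by nlinarith [mul_nonneg hc hE]))
  calc _ ≤ 1 * (1 - exp (-(η + c * E))) := by gcongr
    _ ≤ η + c * E := by rw [one_mul]; exact one_sub_exp_neg_le _

lemma le_p0 (hb : 1 ≤ b) (hc : 0 ≤ c) (hE : 0 ≤ E) (hη : η = b * E) (hcη : c * η ≤ 1) :
    (1 - c * η) * (η - η ^ 2 / 2) ≤ exp (-((b - 1) * c * E)) - exp (-η - b * c * E) := by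
  have hη0 : 0 ≤ η := by rw [hη]; positivity
  have hA : 1 - c * η ≤ exp (-((b - 1) * c * E)) := by
    have := add_one_le_exp (-((b - 1) * c * E))
    nlinarith [mul_nonneg hc hE]
  have hpx : η - η ^ 2 / 2 ≤ 1 - exp (-(η + c * E)) := by
    have : exp (-(η + c * E)) ≤ exp (-η) := exp_le_exp.2 (by nlinarith [mul_nonneg hc hE])
    linarith [sub_sq_div_two_le_one_sub_exp_neg hη0]
  rw [p0_eq]
  calc (1 - c * η) * (η - η ^ 2 / 2) ≤ (1 - c * η) * (1 - exp (-(η + c * E))) := by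
        gcongr
    _ ≤ _ := by
        gcongr
        exact sub_nonneg.2 (exp_le_one_iff.2 (by nlinarith [mul_nonneg hc hE]))

lemma p1_nonneg (hc : 0 ≤ c) (hE : 0 ≤ E) :
    0 ≤ exp (-η - (b - 1) * c * E) - exp (-η - b * c * E) := by
  rw [p1_eq]
  have : exp (-(c * E)) ≤ 1 := exp_le_one_iff.2 (by nlinarith [mul_nonneg hc hE])
  exact mul_nonneg (exp_pos _).le (mul_nonneg (exp_pos _).le (by linarith))

lemma mul_p1_le_mul_p0 (hb : 1 ≤ b) (hc : 0 ≤ c) (hE : 0 ≤ E) (hη : η = b * E) :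
    (b - 1) * (exp (-η - (b - 1) * c * E) - exp (-η - b * c * E))
      ≤ c * (exp (-((b - 1) * c * E)) - exp (-η - b * c * E)) := by
  have key : (b - 1) * (exp (-η) * (1 - exp (-(c * E)))) ≤ c * (1 - exp (-(η + c * E))) :=
    calc (b - 1) * (exp (-η) * (1 - exp (-(c * E))))
        ≤ (b - 1) * (exp (-η) * (c * E)) := by
          gcongr
          exact one_sub_exp_neg_le _
      _ = c * (η * exp (-η)) - c * E * exp (-η) := by rw [hη]; ring
      _ ≤ c * (1 - exp (-η)) := by
          have := mul_nonneg (mul_nonneg hc hE) (exp_pos (-η)).le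
          nlinarith [mul_le_mul_of_nonneg_left (mul_exp_neg_le_one_sub_exp_neg η) hc]
      _ ≤ c * (1 - exp (-(η + c * E))) := by
          gcongr
          nlinarith [mul_nonneg hc hE]
  rw [p1_eq, p0_eq, mul_left_comm, mul_left_comm c]
  exact mul_le_mul_of_nonneg_left key (exp_pos _).le

lemma single_detection_bound {p0 p1 : ℝ} (hb : 1 ≤ b) (hc : 0 ≤ c) (hE0 : 0 < E)
    (hE1 : E ≤ 1) (hη : η = b * E) (hcη : c * η < 1)
    (hp0 : p0 = exp (-((b - 1) * c * E)) - exp (-η - b * c * E))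
    (hp1 : p1 = exp (-η - (b - 1) * c * E) - exp (-η - b * c * E)) :
    η * ((1 - η / 2) * log b - c * η * log b - (1 + c * E / η) * log (1 + c)
        + (1 + c * E / η) * (log (1 - c * η) + log (1 - η / 2)) - 1 - c * E / η)
      ≤ p0 * log (b * p0 / (p0 + (b - 1) * p1))
        + (b - 1) * p1 * log (b * p1 / (p0 + (b - 1) * p1)) := by
  have hη0 : 0 < η := by rw [hη]; positivity
  have hEη : E ≤ η := by rw [hη]; nlinarith
  have hcE : c * E ≤ 1 := by nlinarith
  have hp0pos : 0 < p0 := hp0 ▸ p0_pos hc hE0.le hη0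
  calc _ = (η - η ^ 2 / 2 - c * η ^ 2) * log b - (η + c * E) * log (1 + c)
          + (η + c * E) * (log (1 - c * η) + log (1 - η / 2)) - (η + c * E) := by
        field_simp
        ring
    _ ≤ p0 * (log b - log (1 + c) - 1) :=
        le_mul_log_sub_log_sub_one hb (by rw [hη]; nlinarith) hc (by positivity) hcE hη0 hcη
          hp0pos.le (hp0 ▸ le_p0 hb hc hE0.le hη hcη.le) (hp0 ▸ p0_le hb hc hE0.le hη0.le)
    _ ≤ _ := log_sub_log_sub_one_le_mul_log_add_mul_log hb hc hp0pos (hp1 ▸ p1_nonneg hc hE0.le)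
          (hp0 ▸ hp1 ▸ mul_p1_le_mul_p0 hb hc hE0.le hη)

lemma le_p2 (hb : 2 ≤ b) (hc : 0 ≤ c) (hE : 0 ≤ E) (hη : η = b * E) (hcE : c * E ≤ 2)
    (hcη : c * η ≤ 1) :
    (η - η ^ 2 / 2) * (c * E - c ^ 2 * E ^ 2 / 2) * (1 - c * η)
      ≤ (1 - exp (-η - c * E)) * (1 - exp (-(c * E))) * exp (-((b - 2) * c * E)) := by
  have hη0 : 0 ≤ η := by rw [hη]; positivity
  have hd : 0 ≤ c * E := mul_nonneg hc hE
  have hu : η - η ^ 2 / 2 ≤ 1 - exp (-η - c * E) := by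
    have : exp (-η - c * E) ≤ exp (-η) := exp_le_exp.2 (by linarith)
    linarith [sub_sq_div_two_le_one_sub_exp_neg hη0]
  have hv : c * E - c ^ 2 * E ^ 2 / 2 ≤ 1 - exp (-(c * E)) := by
    have := sub_sq_div_two_le_one_sub_exp_neg hd
    rwa [mul_pow] at this
  have hw : 1 - c * η ≤ exp (-((b - 2) * c * E)) := by
    have := add_one_le_exp (-((b - 2) * c * E))
    nlinarith
  have hX : 0 ≤ c * E - c ^ 2 * E ^ 2 / 2 := by nlinarith
  have hY : 0 ≤ 1 - c * η := by linarith
  have hu0 : 0 ≤ 1 - exp (-η - c * E) := sub_nonneg.2 (exp_le_one_iff.2 (by linarith))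
  calc (η - η ^ 2 / 2) * (c * E - c ^ 2 * E ^ 2 / 2) * (1 - c * η)
      ≤ (1 - exp (-η - c * E)) * (c * E - c ^ 2 * E ^ 2 / 2) * (1 - c * η) :=
        mul_le_mul_of_nonneg_right (mul_le_mul_of_nonneg_right hu hX) hY
    _ ≤ _ := mul_le_mul (mul_le_mul_of_nonneg_left hv hu0) hw hY (mul_nonneg hu0 (hX.trans hv))

lemma p2_le (hb : 2 ≤ b) (hc : 0 ≤ c) (hE : 0 ≤ E) (hη : 0 ≤ η) :
    (1 - exp (-η - c * E)) * (1 - exp (-(c * E))) * exp (-((b - 2) * c * E))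
      ≤ (η + c * E) * (c * E) := by
  have hd : 0 ≤ c * E := mul_nonneg hc hE
  have h1 : 0 ≤ 1 - exp (-(c * E)) := sub_nonneg.2 (exp_le_one_iff.2 (by linarith))
  have h2 : exp (-((b - 2) * c * E)) ≤ 1 := exp_le_one_iff.2 (by nlinarith)
  calc _ ≤ (η + c * E) * (c * E) * 1 := by
        gcongr
        · rw [← neg_add']
          exact one_sub_exp_neg_le _
        · exact one_sub_exp_neg_le _
    _ = _ := mul_one _

lemma p3_le (hb : 2 ≤ b) (hc : 0 ≤ c) (hE : 0 ≤ E) (hη : 0 ≤ η) :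
    exp (-η - c * E) * (1 - exp (-(c * E))) ^ 2 * exp (-((b - 3) * c * E)) ≤ (c * E) ^ 2 := by
  have hd : 0 ≤ c * E := mul_nonneg hc hE
  have h1 : 0 ≤ 1 - exp (-(c * E)) := sub_nonneg.2 (exp_le_one_iff.2 (by linarith))
  have h2 : exp (-η - c * E) * exp (-((b - 3) * c * E)) ≤ 1 := by
    rw [← exp_add]
    exact exp_le_one_iff.2 (by nlinarith)
  calc _ = exp (-η - c * E) * exp (-((b - 3) * c * E)) * (1 - exp (-(c * E))) ^ 2 := by ring
    _ ≤ 1 * (c * E) ^ 2 := by gcongr; exact one_sub_exp_neg_le _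
    _ = _ := one_mul _

lemma double_detection_bound {p2 p3 : ℝ} (hb : 2 ≤ b) (hc : 0 ≤ c) (hE : 0 < E)
    (hη : η = b * E) (hcη : c * η < 1)
    (hp2 : p2 = (1 - exp (-η - c * E)) * (1 - exp (-(c * E))) * exp (-((b - 2) * c * E)))
    (hp3 : p3 = exp (-η - c * E) * (1 - exp (-(c * E))) ^ 2 * exp (-((b - 3) * c * E))) :
    η * ((1 - η / 2) * (b - 1) * (c * E - c ^ 2 * E ^ 2 / 2) * (1 - c * η) * log (b / 2)
        - c ^ 2 / 2 * η - c * (η + c * E))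
      ≤ (b - 1) * p2 * log (b * p2 / (2 * p2 + (b - 2) * p3))
        + (b - 1) * (b - 2) / 2 * p3 * log (b * p3 / (2 * p2 + (b - 2) * p3)) := by
  rcases hc.eq_or_lt with rfl | hc
  · simp [hp2, hp3]
  have hb0 : 0 < b := by linarith
  have hη0 : 0 < η := by rw [hη]; positivity
  have hd : 0 < c * E := mul_pos hc hE
  have hbd : b * (c * E) = c * η := by rw [hη]; ring
  have hd2 : c * E ≤ 2 := by nlinarith
  have hp2pos : 0 < p2 := by
    rw [hp2]
    have h1 : exp (-η - c * E) < 1 := exp_lt_one_iff.2 (by linarith)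
    have h2 : exp (-(c * E)) < 1 := exp_lt_one_iff.2 (by linarith)
    exact mul_pos (mul_pos (by linarith) (by linarith)) (exp_pos _)
  have hp3nonneg : 0 ≤ p3 := by rw [hp3]; positivity
  have hlog : 0 ≤ (b - 1) * log (b / 2) :=
    mul_nonneg (by linarith) (log_nonneg (by rw [le_div_iff₀ two_pos]; linarith))
  have hmain : η * ((1 - η / 2) * (b - 1) * (c * E - c ^ 2 * E ^ 2 / 2) * (1 - c * η)
      * log (b / 2)) ≤ (b - 1) * p2 * log (b / 2) := by
    have := mul_le_mul_of_nonneg_right (hp2 ▸ le_p2 hb hc.le hE.le hη hd2 hcη.le) hlog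
    linarith
  have hrem : (b - 1) * (b - 2) / (2 * b) * (2 * p2 + (b - 2) * p3)
      ≤ η * (c ^ 2 / 2 * η + c * (η + c * E)) :=
    calc (b - 1) * (b - 2) / (2 * b) * (2 * p2 + (b - 2) * p3)
        ≤ b / 2 * (2 * p2 + (b - 2) * p3) := by
          refine mul_le_mul_of_nonneg_right ?_ (by nlinarith)
          rw [div_le_div_iff₀ (by positivity) two_pos]
          nlinarith
      _ ≤ b / 2 * (2 * ((η + c * E) * (c * E)) + (b - 2) * (c * E) ^ 2) := by
          have h2 := hp2 ▸ p2_le hb hc.le hE.le hη0.le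
          have h3 := hp3 ▸ p3_le hb hc.le hE.le hη0.le
          gcongr ?_ * (2 * ?_ + ?_ * ?_)
      _ = c * η * (η + c * E) + (c * η) ^ 2 / 2 - c * η * (c * E) := by
          rw [← hbd]; ring
      _ ≤ η * (c ^ 2 / 2 * η + c * (η + c * E)) := by nlinarith
  linarith [mul_log_div_two_sub_le hb hp2pos hp3nonneg]

end SoftPPM

theorem stmt_6_general (c E : ℝ) (hc : 0 ≤ c) (hE0 : 0 < E) (hE1 : E < 1)
    (hcond2 : E < Real.exp (-c))
    (b : ℕ) (hb : b = ⌊1 / (E * Real.log (1 / E))⌋₊)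
    (η p0 p1 p2 p3 : ℝ) (hη : η = (b : ℝ) * E)
    (hp0 : p0 = Real.exp (-(((b : ℝ) - 1) * c * E)) - Real.exp (-η - (b : ℝ) * c * E))
    (hp1 : p1 = Real.exp (-η - ((b : ℝ) - 1) * c * E) - Real.exp (-η - (b : ℝ) * c * E))
    (hp2 : p2 = (1 - Real.exp (-η - c * E)) * (1 - Real.exp (-(c * E)))
        * Real.exp (-(((b : ℝ) - 2) * c * E)))
    (hp3 : p3 = Real.exp (-η - c * E) * (1 - Real.exp (-(c * E))) ^ 2
        * Real.exp (-(((b : ℝ) - 3) * c * E))) :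
    (1 / η) * (p0 * Real.log ((b : ℝ) * p0 / (p0 + ((b : ℝ) - 1) * p1))
        + ((b : ℝ) - 1) * p1 * Real.log ((b : ℝ) * p1 / (p0 + ((b : ℝ) - 1) * p1))
        + ((b : ℝ) - 1) * p2 * Real.log ((b : ℝ) * p2 / (2 * p2 + ((b : ℝ) - 2) * p3))
        + (((b : ℝ) - 1) * ((b : ℝ) - 2) / 2) * p3
            * Real.log ((b : ℝ) * p3 / (2 * p2 + ((b : ℝ) - 2) * p3)))
    ≥ (1 - η / 2) * Real.log (b : ℝ) - c * η * Real.log (b : ℝ)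
        - (1 + c * E / η) * Real.log (1 + c)
        + (1 + c * E / η) * (Real.log (1 - c * η) + Real.log (1 - η / 2))
        - 1 - c * E / η
        + (1 - η / 2) * ((b : ℝ) - 1) * (c * E - c ^ 2 * E ^ 2 / 2) * (1 - c * η)
            * Real.log ((b : ℝ) / 2)
        - (c ^ 2 / 2) * η - c * (η + c * E) := by
  have hL : 0 < log (1 / E) := log_pos (one_lt_one_div hE0 hE1)
  have hb2 : (2 : ℝ) ≤ b := by exact_mod_cast hb ▸ two_le_floor_one_div_mul_log hE0 hE1
  have hbE : (b : ℝ) ≤ 1 / (E * log (1 / E)) := hb ▸ Nat.floor_le (by positivity)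
  have hcη : c * η < 1 :=
    hη ▸ mul_mul_lt_one_of_le_one_div_mul_log (by linarith) hE0 hcond2 hbE
  have hη0 : 0 < η := by rw [hη]; positivity
  have hB := SoftPPM.single_detection_bound (by linarith) hc hE0 hE1.le hη hcη hp0 hp1
  have hA := SoftPPM.double_detection_bound hb2 hc hE0 hη hcη hp2 hp3
  rw [ge_iff_le, one_div_mul_eq_div, le_div_iff₀ hη0]
  linarith

/-- Proposition 2: photon-efficiency lower bound achieved by soft-decision PPM. -/
theorem stmt_6 (c E : ℝ) (hc : 0 ≤ c) (hE0 : 0 < E) (hE1 : E < 1)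
    (hcond1 : E * Real.log (1 / E) < 1) (hcond2 : E < Real.exp (-c))
    (b : ℕ) (hb : b = ⌊1 / (E * Real.log (1 / E))⌋₊)
    (η p0 p1 p2 p3 : ℝ) (hη : η = (b : ℝ) * E)
    (hp0 : p0 = Real.exp (-(((b : ℝ) - 1) * c * E)) - Real.exp (-η - (b : ℝ) * c * E))
    (hp1 : p1 = Real.exp (-η - ((b : ℝ) - 1) * c * E) - Real.exp (-η - (b : ℝ) * c * E))
    (hp2 : p2 = (1 - Real.exp (-η - c * E)) * (1 - Real.exp (-(c * E)))
        * Real.exp (-(((b : ℝ) - 2) * c * E)))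
    (hp3 : p3 = Real.exp (-η - c * E) * (1 - Real.exp (-(c * E))) ^ 2
        * Real.exp (-(((b : ℝ) - 3) * c * E))) :
    (1 / η) * (p0 * Real.log ((b : ℝ) * p0 / (p0 + ((b : ℝ) - 1) * p1))
        + ((b : ℝ) - 1) * p1 * Real.log ((b : ℝ) * p1 / (p0 + ((b : ℝ) - 1) * p1))
        + ((b : ℝ) - 1) * p2 * Real.log ((b : ℝ) * p2 / (2 * p2 + ((b : ℝ) - 2) * p3))
        + (((b : ℝ) - 1) * ((b : ℝ) - 2) / 2) * p3
            * Real.log ((b : ℝ) * p3 / (2 * p2 + ((b : ℝ) - 2) * p3)))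
    ≥ (1 - η / 2) * Real.log (b : ℝ) - c * η * Real.log (b : ℝ)
        - (1 + c * E / η) * Real.log (1 + c)
        + (1 + c * E / η) * (Real.log (1 - c * η) + Real.log (1 - η / 2))
        - 1 - c * E / η
        + (1 - η / 2) * ((b : ℝ) - 1) * (c * E - c ^ 2 * E ^ 2 / 2) * (1 - c * η)
            * Real.log ((b : ℝ) / 2)
        - (c ^ 2 / 2) * η - c * (η + c * E) :=
  stmt_6_general c E hc hE0 hE1 hcond2 b hb η p0 p1 p2 p3 hη hp0 hp1 hp2 hp3
end

section
/- Let c ≥ 0 and E ∈ (0,1) satisfy E < e^{−1}, E·log(1/E) < e^{−1/(1−2e^{−1})}/(1+c), and E·(log(1/E))⁴ < 144/(1+c)². Write L := log(1/E) and let R be the distribution on ℕ with R(0) = 1 − (1+c)·E and R(y) = (1+c)·E·(1 − 1/L)·(1/L)^{y−1} for y ≥ 1. Define D(x) := ∑_{y=0}^∞ Pois_{x+cE}(y)·log(Pois_{x+cE}(y)/R(y)) for x ≥ 0. Let μ be a Borel probability measure on ℝ with μ((−∞,0)) = 0 and ∫ x dμ(x) ≤ E, and assume x ↦ D(x) is μ-integrable.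 Then (1/E)·∫ D(x) dμ(x) ≤ log(1/E) − log log(1/E) − log(1+c) + 2 + log 13 + (1/E)·( log(1/(1−(1+c)·E)) − (1+c)·E ) + (c²/2)·E·log log(1/E) + (1+c)·log(1/(1 − 1/log(1/E))). -/
/-!
Put `T = (1 + c) E`, `L = log (1 / E)`, `l = log L` and `ν = x + c E`. As `-log R(y) = A + l y` is
affine for `y ≥ 1`, the cross-entropy `∑ Pois_ν(y) (-log R(y))` equals
`C₀ e^{-ν} + A (1 - e^{-ν}) + l ν` with `C₀ = -log (1 - T)`, while the negative entropy
`∑ Pois_ν log Pois_ν` is at most both `0` and `ν log ν - ν`. It then suffices to dominate the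
resulting bound on `D(x)` by an affine function `(S - 1) x + K` of `x`, with
`S = -log T - l + 2 + log 13`; integrating against `μ` and using `∫ x dμ ≤ E` gives the claim.

The domination is checked in three regimes. Up to `ν₀ = e^{S - A - l - 1}` the function
`ν log ν - (S - A - l) ν` decreases, so the bound is at most its value at `ν = c E`. For
`ν₀ ≤ ν ≤ 1` the quadratic term of `1 - e^{-ν}` absorbs the growth, and for `ν ≥ 1` the tangent
line of `1 - e^{-ν}` at `1` does. The hypotheses on `E` enter only through `L ≥ 5` and
`T L² e^{L/2} ≤ e^{5/2}`.
-/

open Real MeasureTheory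
open scoped Nat

-- Mathlib's `ProbabilityTheory.poissonPMFReal` takes its mean in `ℝ≥0`; here the mean is real.
noncomputable def poisson (ν : ℝ) (y : ℕ) : ℝ := exp (-ν) * ν ^ y / y !

lemma hasSum_poisson (ν : ℝ) : HasSum (poisson ν) 1 := by
  have h := (NormedSpace.expSeries_div_hasSum_exp ν).mul_left (exp (-ν))
  rw [← Real.exp_eq_exp_ℝ, ← Real.exp_add, neg_add_cancel, Real.exp_zero] at h
  exact h.congr_fun fun y => mul_div_assoc ..

lemma natCast_mul_poisson_succ (ν : ℝ) (n : ℕ) :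
    ((n : ℝ) + 1) * poisson ν (n + 1) = ν * poisson ν n := by
  simp only [poisson, Nat.factorial_succ, pow_succ]
  push_cast
  field_simp

lemma hasSum_natCast_mul_poisson (ν : ℝ) : HasSum (fun y : ℕ => (y : ℝ) * poisson ν y) ν := by
  rw [← hasSum_nat_add_iff' 1]
  simpa [natCast_mul_poisson_succ] using (hasSum_poisson ν).mul_left ν

lemma poisson_zero (ν : ℝ) : poisson ν 0 = exp (-ν) := by simp [poisson]

lemma poisson_nonneg {ν : ℝ} (hν : 0 ≤ ν) (y : ℕ) : 0 ≤ poisson ν y := by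
  unfold poisson; positivity

lemma poisson_le_one {ν : ℝ} (hν : 0 ≤ ν) (y : ℕ) : poisson ν y ≤ 1 :=
  le_hasSum (hasSum_poisson ν) y fun j _ => poisson_nonneg hν j

lemma poisson_mul_log_poisson_nonpos {ν : ℝ} (hν : 0 ≤ ν) (y : ℕ) :
    poisson ν y * log (poisson ν y) ≤ 0 :=
  mul_log_nonpos (poisson_nonneg hν y) (poisson_le_one hν y)

lemma poisson_mul_log_poisson_le {ν : ℝ} (hν : 0 ≤ ν) (y : ℕ) :
    poisson ν y * log (poisson ν y) ≤ poisson ν y * (-ν + log ν * y) := by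
  rcases hν.eq_or_lt with rfl | hν
  · cases y <;> simp [poisson]
  apply mul_le_mul_of_nonneg_left _ (poisson_nonneg hν.le y)
  have hfact : (1 : ℝ) ≤ y ! := by exact_mod_cast Nat.one_le_iff_ne_zero.mpr y.factorial_ne_zero
  rw [poisson, log_div (by positivity) (by positivity), log_mul (by positivity) (by positivity),
    log_exp, log_pow]
  linarith [log_nonneg hfact]

/-- A non-summable series has `tsum = 0`, hence the assumption `0 ≤ b`. -/
lemma tsum_le_of_le_of_hasSum {ι : Type*} {f g : ι → ℝ} {a b : ℝ} (hfg : ∀ i, f i ≤ g i)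
    (hg : HasSum g a) (hab : a ≤ b) (hb : 0 ≤ b) : ∑' i, f i ≤ b := by
  by_cases hf : Summable f
  · exact (hasSum_le hfg hf.hasSum hg).trans hab
  · rw [tsum_eq_zero_of_not_summable hf]; exact hb

lemma tsum_poisson_mul_log_div_le {ν a b A l C₀ t : ℝ} {R : ℕ → ℝ} (hν : 0 ≤ ν)
    (hR : ∀ y, 0 < R y) (hR0 : log (R 0) = -C₀)
    (hRs : ∀ n : ℕ, log (R (n + 1)) = -(A + l * (n + 1)))
    (hP : ∀ y, poisson ν y * log (poisson ν y) ≤ poisson ν y * (a + b * y))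
    (ht : a + b * ν + C₀ * exp (-ν) + A * (1 - exp (-ν)) + l * ν ≤ t) (ht0 : 0 ≤ t) :
    ∑' y, poisson ν y * log (poisson ν y / R y) ≤ t := by
  have hlogR : ∀ y : ℕ, -log (R y) = A + l * y + if y = 0 then C₀ - A else 0 := by
    rintro (_ | n)
    · simp [hR0]
    · simp [hRs]
  have hg : HasSum (fun y : ℕ => poisson ν y * (a + b * y) + poisson ν y * -log (R y))
      (a + A + (b + l) * ν + (C₀ - A) * exp (-ν)) := by
    have h := (((hasSum_poisson ν).mul_left (a + A)).add
      ((hasSum_natCast_mul_poisson ν).mul_left (b + l))).add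
      (hasSum_ite_eq 0 (poisson ν 0 * (C₀ - A)))
    rw [poisson_zero, mul_one, mul_comm (exp (-ν))] at h
    refine h.congr_fun fun y => ?_
    rw [hlogR]
    rcases y with _ | n
    · simp only [poisson_zero, if_pos]; ring
    · simp only [Nat.succ_ne_zero, if_false]; ring
  refine tsum_le_of_le_of_hasSum (fun y => ?_) hg (by linarith) ht0
  rcases (poisson_nonneg hν y).eq_or_lt with hP0 | hPpos
  · simp [← hP0]
  · rw [log_div hPpos.ne' (hR y).ne', mul_sub]
    linarith [hP y]

lemma one_sub_exp_neg_le_sub_sq_div_four {x : ℝ} (h0 : 0 ≤ x) (h1 : x ≤ 1) :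
    1 - exp (-x) ≤ x - x ^ 2 / 4 := by
  have h := Real.exp_bound (x := -x) (by rwa [abs_neg, abs_of_nonneg h0]) (n := 3) (by norm_num)
  simp only [Finset.sum_range_succ, Finset.sum_range_zero, abs_neg, abs_of_nonneg h0] at h
  norm_num [Nat.factorial] at h
  nlinarith [(abs_le.mp h).1, mul_le_mul_of_nonneg_left h1 (sq_nonneg x)]

lemma exp_neg_one_mul_le_exp_neg (x : ℝ) : exp (-1) * (2 - x) ≤ exp (-x) := by
  have h := mul_le_mul_of_nonneg_left (add_one_le_exp (1 - x)) (exp_pos (-1)).le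
  rwa [← exp_add, show -1 + (1 - x) = -x by ring, show 1 - x + 1 = 2 - x by ring] at h

lemma one_third_le_exp_neg_one : 1 / 3 ≤ exp (-1) := by
  rw [exp_neg, one_div]
  exact inv_anti₀ (exp_pos 1) (by linarith [exp_one_lt_d9])

lemma exp_neg_one_le_three_eighths : exp (-1) ≤ 3 / 8 := by
  rw [exp_neg, show (3 / 8 : ℝ) = (8 / 3)⁻¹ by norm_num]
  exact inv_anti₀ (by norm_num) (by linarith [exp_one_gt_d9])

lemma mul_log_add_sub_le_mul_log {u v : ℝ} (hu : 0 ≤ u) (hv : 0 < v) :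
    u * log v + u - v ≤ u * log u := by
  rcases hu.eq_or_lt with rfl | hu
  · simpa using hv.le
  have h := mul_le_mul_of_nonneg_left (log_le_sub_one_of_pos (div_pos hv hu)) hu.le
  rw [log_div hv.ne' hu.ne', mul_sub, mul_sub, mul_div_cancel₀ _ hu.ne'] at h
  linarith

lemma le_log_one_div_one_sub {T : ℝ} (hT : T < 1) : T ≤ log (1 / (1 - T)) := by
  rw [one_div, log_inv]
  linarith [log_le_sub_one_of_pos (by linarith : 0 < 1 - T)]

lemma mul_log_sub_log_add_le {d T lam : ℝ} (hd : 0 ≤ d) (hdT : d ≤ T) (hlam : 0 ≤ lam) :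
    d * (log d - log T + lam) ≤ T * lam := by
  have h : d * (log d - log T) ≤ 0 := by
    rcases hd.eq_or_lt with rfl | hd0
    · simp
    exact mul_nonpos_of_nonneg_of_nonpos hd (by linarith [log_le_log hd0 hdT])
  nlinarith [mul_le_mul_of_nonneg_right hdT hlam]

section AffineDomination

variable {ν d A l C₀ S τ : ℝ}

lemma le_affine_of_le_exp (hd : 0 ≤ d) (hdν : d ≤ ν) (hν : ν ≤ exp (S - A - l - 1))
    (hA : 0 ≤ A) (hC₀ : 0 ≤ C₀) (hτ : d * (log d + A + l) ≤ τ) :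
    ν * log ν - ν + C₀ * exp (-ν) + A * (1 - exp (-ν)) + l * ν
      ≤ (S - 1) * (ν - d) + C₀ - d + τ := by
  have hexp : C₀ * exp (-ν) ≤ C₀ := mul_le_of_le_one_right hC₀ (exp_le_one_iff.mpr (by linarith))
  have hlin : A * (1 - exp (-ν)) ≤ A * ν :=
    mul_le_mul_of_nonneg_left (by linarith [one_sub_le_exp_neg ν]) hA
  -- `x ↦ x log x - (S - A - l) x` decreases up to `exp (S - A - l - 1)`
  have hdec : ν * log ν - (S - A - l) * ν ≤ d * log d - (S - A - l) * d := by
    rcases (hd.trans hdν).eq_or_lt with hν0 | hν0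
    · obtain rfl : d = 0 := by linarith
      simp [← hν0]
    have hlog : log ν ≤ S - A - l - 1 := (log_le_iff_le_exp hν0).mpr hν
    nlinarith [mul_log_add_sub_le_mul_log hd hν0,
      mul_nonneg (sub_nonneg.mpr hdν) (sub_nonneg.mpr hlog)]
  linarith

lemma le_affine_of_exp_le_of_le_one (hν : exp (S - A - l - 1) ≤ ν) (hν1 : ν ≤ 1)
    (hA : 4 ≤ A * exp (S - A - l - 1)) (hd : S * d ≤ 2 * exp (S - A - l - 1)) (hC₀ : 0 ≤ C₀)
    (hτ : 0 ≤ τ) :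
    ν * log ν - ν + C₀ * exp (-ν) + A * (1 - exp (-ν)) + l * ν
      ≤ (S - 1) * (ν - d) + C₀ - d + τ := by
  set ν₀ := exp (S - A - l - 1)
  have hν₀ : 0 < ν₀ := exp_pos _
  have hν0 : 0 < ν := hν₀.trans_le hν
  have hexp : C₀ * exp (-ν) ≤ C₀ := mul_le_of_le_one_right hC₀ (exp_le_one_iff.mpr (by linarith))
  have hquad : A * (1 - exp (-ν)) ≤ A * (ν - ν ^ 2 / 4) :=
    mul_le_mul_of_nonneg_left (one_sub_exp_neg_le_sub_sq_div_four hν0.le hν1) (by nlinarith)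
  -- `log (ν / ν₀) ≤ ν / ν₀ - 1`, and `ν / ν₀ ≤ A ν / 4` is paid for by the gain in `hquad`
  have hlog : log ν ≤ S - A - l - 2 + A * ν / 4 := by
    have h := log_le_sub_one_of_pos (div_pos hν0 hν₀)
    rw [log_div hν0.ne' hν₀.ne', log_exp] at h
    have hgain : ν / ν₀ ≤ A * ν / 4 := by
      rw [div_le_iff₀ hν₀]; nlinarith
    linarith
  nlinarith [mul_le_mul_of_nonneg_left hlog hν0.le]

lemma le_affine_of_one_le (hν : 1 ≤ ν) (hA : 0 ≤ A) (hC₀ : 0 ≤ C₀) (hτ : 0 ≤ τ)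
    (hslope : A * exp (-1) + l ≤ S - 1) (hval : A * (1 - exp (-1)) + l + S * d ≤ S - 1) :
    C₀ * exp (-ν) + A * (1 - exp (-ν)) + l * ν ≤ (S - 1) * (ν - d) + C₀ - d + τ := by
  have hexp : C₀ * exp (-ν) ≤ C₀ := mul_le_of_le_one_right hC₀ (exp_le_one_iff.mpr (by linarith))
  have htan : A * (1 - exp (-ν)) ≤ A * (1 - exp (-1) * (2 - ν)) :=
    mul_le_mul_of_nonneg_left (by linarith [exp_neg_one_mul_le_exp_neg ν]) hA
  nlinarith [mul_nonneg (sub_nonneg.mpr hslope) (sub_nonneg.mpr hν)]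

end AffineDomination

lemma two_le_log_thirteen : 2 ≤ log 13 := by
  rw [le_log_iff_exp_le (by norm_num), show (2 : ℝ) = (2 : ℕ) * 1 by norm_num, exp_nat_mul]
  nlinarith [exp_one_lt_d9, exp_pos 1]

lemma log_thirteen_le_four : log 13 ≤ 4 := by
  rw [log_le_iff_le_exp (by norm_num), show (4 : ℝ) = (4 : ℕ) * 1 by norm_num, exp_nat_mul]
  calc (13 : ℝ) ≤ 2 ^ 4 := by norm_num
    _ ≤ exp 1 ^ 4 := pow_le_pow_left₀ (by norm_num) (by linarith [exp_one_gt_d9]) 4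

lemma log_one_hundred_forty_four_le_five : log 144 ≤ 5 := by
  rw [log_le_iff_le_exp (by norm_num), show (5 : ℝ) = (5 : ℕ) * 1 by norm_num, exp_nat_mul]
  calc (144 : ℝ) ≤ 2.7182818283 ^ 5 := by norm_num
    _ ≤ exp 1 ^ 5 := pow_le_pow_left₀ (by norm_num) exp_one_gt_d9.le 5

lemma seven_halves_le_one_div_one_sub_two_mul_exp_neg_one :
    7 / 2 ≤ 1 / (1 - 2 * exp (-1)) := by
  have h : exp (-1) * exp 1 = 1 := by rw [← exp_add]; simp
  have hlo : 5 / 14 ≤ exp (-1) := by nlinarith [exp_one_lt_d9, exp_pos (-1)]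
  have hhi : exp (-1) < 1 / 2 := by nlinarith [exp_one_gt_d9, exp_pos (-1)]
  rw [le_div_iff₀ (by linarith)]
  linarith

lemma one_le_log_of_five_le {L : ℝ} (hL : 5 ≤ L) : 1 ≤ log L := by
  rw [le_log_iff_exp_le (by linarith)]
  linarith [exp_one_lt_d9]

lemma log_le_div_four_add_two {L : ℝ} (hL : 0 < L) : log L ≤ L / 4 + 2 := by
  have h := log_le_sub_one_of_pos (by positivity : 0 < L / 4)
  have h4 := log_le_sub_one_of_pos (by norm_num : (0 : ℝ) < 4)
  rw [log_div hL.ne' (by norm_num)] at h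
  linarith

lemma five_le_of_lt_sub_log {L : ℝ} (hL : 1 ≤ L) (h : 7 / 2 < L - log L) : 5 ≤ L := by
  by_contra! hL5
  -- `L - log L` increases on `[1, ∞)`, and `5 - log 5 ≤ 7 / 2`
  have hmono : log (5 / L) ≤ 5 - L := by
    have h1 := log_le_sub_one_of_pos (by positivity : 0 < 5 / L)
    have h2 : 5 / L - 1 ≤ 5 - L := by
      rw [div_sub_one (by positivity), div_le_iff₀ (by positivity)]; nlinarith
    linarith
  have hlog5 : 3 / 2 ≤ log 5 := by
    rw [le_log_iff_exp_le (by norm_num)]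
    have h3 : exp (3 / 2) ^ 2 = exp 1 ^ 3 := by rw [← exp_nat_mul, ← exp_nat_mul]; norm_num
    have he3 := pow_lt_pow_left₀ exp_one_lt_d9 (exp_pos 1).le (by norm_num : 3 ≠ 0)
    nlinarith [exp_pos (3 / 2)]
  rw [log_div (by norm_num) (by positivity)] at hmono
  linarith

lemma log_one_div_one_sub_inv_nonneg {L : ℝ} (hL : 1 < L) : 0 ≤ log (1 / (1 - 1 / L)) := by
  apply log_nonneg
  rw [le_div_iff₀ (by rw [sub_pos, div_lt_one (by linarith)]; exact hL)]
  have : 0 < 1 / L := by positivity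
  linarith

lemma log_one_div_one_sub_inv_le {L : ℝ} (hL : 5 ≤ L) : log (1 / (1 - 1 / L)) ≤ 1 / 4 := by
  have hpos : 0 < 1 - 1 / L := by rw [sub_pos, div_lt_one (by linarith)]; linarith
  have h := log_le_sub_one_of_pos (one_div_pos.mpr hpos)
  have hdiff : 1 / (1 - 1 / L) - 1 = 1 / (L - 1) := by
    have : L - 1 ≠ 0 := by linarith
    field_simp
    ring
  have hq : 1 / (L - 1) ≤ 1 / 4 := one_div_le_one_div_of_le (by norm_num) (by linarith)
  linarith

lemma div_le_exp_one_add_log_thirteen_sub {L : ℝ} (hL : 5 ≤ L) :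
    28 / L ≤ exp (1 + log 13 - log (1 / (1 - 1 / L)) - log L) := by
  have hpos : 0 < 1 - 1 / L := by rw [sub_pos, div_lt_one (by linarith)]; linarith
  have hinv : 1 / L ≤ 1 / 5 := one_div_le_one_div_of_le (by norm_num) hL
  rw [exp_sub, exp_sub, exp_add, exp_log (by norm_num), exp_log (by positivity),
    exp_log (by linarith), div_div_eq_mul_div, div_le_div_iff_of_pos_right (by linarith)]
  nlinarith [exp_one_gt_d9]

noncomputable def referenceDist (T L : ℝ) : ℕ → ℝ
  | 0 => 1 - T
  | n + 1 => T * (1 - 1 / L) * (1 / L) ^ n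

section referenceDist

variable {T L : ℝ}

lemma referenceDist_pos (hT : 0 < T) (hT1 : T < 1) (hL : 1 < L) (y : ℕ) :
    0 < referenceDist T L y := by
  have : 0 < 1 - 1 / L := by rw [sub_pos, div_lt_one (by linarith)]; exact hL
  cases y <;> simp only [referenceDist] <;> first | linarith | positivity

lemma log_referenceDist_zero : log (referenceDist T L 0) = -log (1 / (1 - T)) := by
  rw [referenceDist, one_div, log_inv, neg_neg]

lemma log_referenceDist_succ (hT : 0 < T) (hL : 1 < L) (n : ℕ) :
    log (referenceDist T L (n + 1))
      = -((-log T + log (1 / (1 - 1 / L)) - log L) + log L * (n + 1)) := by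
  have : 0 < 1 - 1 / L := by rw [sub_pos, div_lt_one (by linarith)]; exact hL
  rw [referenceDist, log_mul (by positivity) (by positivity), log_mul hT.ne' this.ne', log_pow,
    one_div (1 - 1 / L), log_inv, one_div L, log_inv]
  ring

end referenceDist

lemma mul_sq_le_one_of_log_le {L T : ℝ} (hL : 5 ≤ L) (hT : 0 < T)
    (hTL : log T ≤ 5 / 2 - L / 2 - 2 * log L) : T * L ^ 2 ≤ 1 := by
  refine (log_nonpos_iff (by positivity)).mp ?_
  rw [log_mul hT.ne' (by positivity), log_pow]
  push_cast
  linarith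

theorem tsum_poisson_mul_log_div_referenceDist_le {L T d ν : ℝ} (hL : 5 ≤ L) (hT : 0 < T)
    (hTL : log T ≤ 5 / 2 - L / 2 - 2 * log L) (hTE : -L ≤ log T) (hd : 0 ≤ d) (hdT : d ≤ T)
    (hdν : d ≤ ν) :
    ∑' y, poisson ν y * log (poisson ν y / referenceDist T L y)
      ≤ (-log T - log L + 1 + log 13) * (ν - d) + log (1 / (1 - T)) - d
        + T * log (1 / (1 - 1 / L)) := by
  set l := log L
  set lam := log (1 / (1 - 1 / L))
  set C₀ := log (1 / (1 - T))
  set A := -log T + lam - l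
  set S := -log T - l + 2 + log 13
  rw [show -log T - l + 1 + log 13 = S - 1 by ring]
  have hl : 1 ≤ l := one_le_log_of_five_le hL
  have hl' : l ≤ L / 4 + 2 := log_le_div_four_add_two (by linarith)
  have hlam : 0 ≤ lam := log_one_div_one_sub_inv_nonneg (by linarith)
  have hlam' : lam ≤ 1 / 4 := log_one_div_one_sub_inv_le hL
  have h13 := two_le_log_thirteen
  have h13' := log_thirteen_le_four
  have hTL2 := mul_sq_le_one_of_log_le hL hT hTL
  have hT1 : T < 1 := by nlinarith
  have hC₀ : T ≤ C₀ := le_log_one_div_one_sub hT1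
  have hSd : S * d ≤ 2 / L := by
    have h := mul_le_mul (by linarith : S ≤ 2 * L) hdT hd (by linarith)
    rw [le_div_iff₀ (by linarith)]; nlinarith
  have hν := hd.trans hdν
  have hR : ∀ y, 0 < referenceDist T L y := referenceDist_pos hT hT1 (by linarith)
  have hRs : ∀ n : ℕ, log (referenceDist T L (n + 1)) = -(A + l * (n + 1)) :=
    log_referenceDist_succ hT (by linarith)
  have ht0 : 0 ≤ (S - 1) * (ν - d) + C₀ - d + T * lam := by nlinarith [mul_nonneg hT.le hlam]
  rcases le_total ν 1 with hν1 | hν1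
  · refine tsum_poisson_mul_log_div_le hν hR log_referenceDist_zero hRs
      (poisson_mul_log_poisson_le hν) ?_ ht0
    have hν₀ : 28 / L ≤ exp (S - A - l - 1) := by
      rw [show S - A - l - 1 = 1 + log 13 - lam - l by ring]
      exact div_le_exp_one_add_log_thirteen_sub hL
    rcases le_total ν (exp (S - A - l - 1)) with hνν₀ | hν₀ν
    · have hbdry : d * (log d + A + l) ≤ T * lam := by
        convert mul_log_sub_log_add_le hd hdT hlam using 2; ring
      linarith [le_affine_of_le_exp (C₀ := C₀) hd hdν hνν₀ (by linarith) (by linarith) hbdry]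
    · have hA4 : 4 ≤ A * exp (S - A - l - 1) :=
        calc (4 : ℝ) ≤ A * (28 / L) := by rw [mul_div_assoc', le_div_iff₀ (by linarith)]; linarith
          _ ≤ A * exp (S - A - l - 1) := mul_le_mul_of_nonneg_left hν₀ (by linarith)
      have hSd₀ : S * d ≤ 2 * exp (S - A - l - 1) := by
        have : 2 / L ≤ 28 / L := div_le_div_of_nonneg_right (by norm_num) (by linarith)
        linarith [exp_pos (S - A - l - 1)]
      linarith [le_affine_of_exp_le_of_le_one (C₀ := C₀) hν₀ν hν1 hA4 hSd₀ (by linarith)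
        (mul_nonneg hT.le hlam)]
  · refine tsum_poisson_mul_log_div_le hν hR log_referenceDist_zero hRs
      (a := 0) (b := 0) (fun y => by simpa using poisson_mul_log_poisson_nonpos hν y) ?_ ht0
    have hSd' : S * d ≤ 2 / 5 :=
      hSd.trans (div_le_div_of_nonneg_left (by norm_num) (by norm_num) hL)
    have hslope : A * exp (-1) + l ≤ S - 1 := by
      nlinarith [mul_le_mul_of_nonneg_left exp_neg_one_le_three_eighths (by linarith : 0 ≤ A)]
    have hval : A * (1 - exp (-1)) + l + S * d ≤ S - 1 := by
      nlinarith [mul_le_mul_of_nonneg_left one_third_le_exp_neg_one (by linarith : 0 ≤ A)]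
    linarith [le_affine_of_one_le (C₀ := C₀) hν1 (by linarith) (by linarith)
      (mul_nonneg hT.le hlam) hslope hval]

lemma integral_le_of_le_affine {μ : Measure ℝ} [IsProbabilityMeasure μ] {f : ℝ → ℝ}
    {α β m : ℝ} (hsupp : μ (Set.Iio 0) = 0) (hX : Integrable (fun x => x) μ)
    (hmean : ∫ x, x ∂μ ≤ m) (hα : 0 ≤ α) (hf : Integrable f μ)
    (hle : ∀ x, 0 ≤ x → f x ≤ α * x + β) : ∫ x, f x ∂μ ≤ α * m + β := by
  have hae : ∀ᵐ x ∂μ, f x ≤ α * x + β := by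
    have h0 : ∀ᵐ x ∂μ, 0 ≤ x := by
      rw [ae_iff]; simpa only [not_le, Set.Iio_def] using hsupp
    filter_upwards [h0] with x hx using hle x hx
  calc ∫ x, f x ∂μ ≤ ∫ x, (α * x + β) ∂μ :=
        integral_mono_ae hf ((hX.const_mul α).add (integrable_const β)) hae
    _ = α * ∫ x, x ∂μ + β := by
        rw [integral_add (hX.const_mul α) (integrable_const β), integral_const_mul,
          integral_const]
        simp
    _ ≤ α * m + β := by gcongr

lemma five_le_log_one_div {c E : ℝ} (hc : 0 ≤ c) (hE : 0 < E) (h1 : E < exp (-1))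
    (h2 : E * log (1 / E) < exp (-(1 / (1 - 2 * exp (-1)))) / (1 + c)) : 5 ≤ log (1 / E) := by
  set L := log (1 / E) with hL
  have hEL : E = exp (-L) := by rw [hL, one_div, log_inv, neg_neg, exp_log hE]
  have hL1 : 1 < L := by
    rw [hEL, exp_lt_exp] at h1; linarith
  refine five_le_of_lt_sub_log hL1.le ?_
  have h : exp (-L + log L) < exp (-(1 / (1 - 2 * exp (-1)))) := by
    rw [exp_add, exp_log (by linarith), ← hEL]
    exact h2.trans_le (div_le_self (exp_pos _).le (by linarith))
  rw [exp_lt_exp] at h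
  linarith [seven_halves_le_one_div_one_sub_two_mul_exp_neg_one]

lemma log_mul_le_of_mul_pow_four_lt {c E : ℝ} (hc : 0 ≤ c) (hE : 0 < E) (hL : 1 < log (1 / E))
    (h3 : E * log (1 / E) ^ 4 < 144 / (1 + c) ^ 2) :
    log ((1 + c) * E) ≤ 5 / 2 - log (1 / E) / 2 - 2 * log (log (1 / E)) := by
  have hlogE : log E = -log (1 / E) := by rw [one_div, log_inv, neg_neg]
  have h := log_lt_log (by positivity) ((lt_div_iff₀ (by positivity)).mp h3)
  rw [log_mul (by positivity) (by positivity), log_mul hE.ne' (by positivity), log_pow,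
    log_pow] at h
  rw [log_mul (by positivity) hE.ne']
  push_cast at h
  linarith [log_one_hundred_forty_four_le_five]

/-- Proposition 3: duality upper bound on the photon efficiency of the Poisson
channel with average-power constraint `E` and dark current `c·E`. -/
theorem stmt_14 (c E : ℝ) (hc : 0 ≤ c) (hE0 : 0 < E)
    (hcond1 : E < Real.exp (-1))
    (hcond2 : E * Real.log (1 / E) < Real.exp (-(1 / (1 - 2 * Real.exp (-1)))) / (1 + c))
    (hcond3 : E * (Real.log (1 / E)) ^ 4 < 144 / (1 + c) ^ 2)
    (L : ℝ) (hL : L = Real.log (1 / E))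
    (R : ℕ → ℝ) (hR0 : R 0 = 1 - (1 + c) * E)
    (hRy : ∀ y : ℕ, 1 ≤ y → R y = (1 + c) * E * (1 - 1 / L) * (1 / L) ^ (y - 1))
    (D : ℝ → ℝ)
    (hD : ∀ x : ℝ, 0 ≤ x →
      D x = ∑' y : ℕ,
        (Real.exp (-(x + c * E)) * (x + c * E) ^ y / (Nat.factorial y : ℝ))
          * Real.log
              ((Real.exp (-(x + c * E)) * (x + c * E) ^ y / (Nat.factorial y : ℝ))
                / R y))
    (μ : Measure ℝ) [IsProbabilityMeasure μ]
    (hsupp : μ (Set.Iio 0) = 0)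
    (hXint : Integrable (fun x : ℝ => x) μ)
    (hmean : ∫ x, x ∂μ ≤ E)
    (hDint : Integrable D μ) :
    (1 / E) * ∫ x, D x ∂μ
    ≤ Real.log (1 / E) - Real.log (Real.log (1 / E)) - Real.log (1 + c)
        + 2 + Real.log 13
        + (1 / E) * (Real.log (1 / (1 - (1 + c) * E)) - (1 + c) * E)
        + (c ^ 2 / 2) * E * Real.log (Real.log (1 / E))
        + (1 + c) * Real.log (1 / (1 - 1 / Real.log (1 / E))) := by
  have hL5 : 5 ≤ L := hL ▸ five_le_log_one_div hc hE0 hcond1 hcond2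
  have hTL := log_mul_le_of_mul_pow_four_lt hc hE0 (by linarith) hcond3
  rw [← hL] at hTL ⊢
  have hlogT : log ((1 + c) * E) = log (1 + c) - L := by
    rw [log_mul (by linarith) hE0.ne', hL, one_div, log_inv]; ring
  have hR : ∀ y, R y = referenceDist ((1 + c) * E) L y := by
    rintro (_ | n)
    · exact hR0
    · simpa [referenceDist] using hRy (n + 1) (by omega)
  have hpt : ∀ x, 0 ≤ x → D x ≤ (-log ((1 + c) * E) - log L + 1 + log 13) * x
      + (log (1 / (1 - (1 + c) * E)) - c * E + (1 + c) * E * log (1 / (1 - 1 / L))) := by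
    intro x hx
    have h := tsum_poisson_mul_log_div_referenceDist_le hL5 (by positivity) hTL
      (by linarith [log_nonneg (by linarith : (1 : ℝ) ≤ 1 + c)]) (by positivity : 0 ≤ c * E)
      (by nlinarith) (le_add_of_nonneg_left hx : c * E ≤ x + c * E)
    simp only [poisson, ← hR] at h
    rw [hD x hx]
    linarith
  have hI := integral_le_of_le_affine hsupp hXint hmean
    (by linarith [log_nonneg (by linarith : (1 : ℝ) ≤ L), two_le_log_thirteen]) hDint hpt
  have hcross : 0 ≤ c ^ 2 / 2 * E * log L := by
    have := log_nonneg (by linarith : (1 : ℝ) ≤ L); positivity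
  calc 1 / E * ∫ x, D x ∂μ
      ≤ 1 / E * ((-log ((1 + c) * E) - log L + 1 + log 13) * E
          + (log (1 / (1 - (1 + c) * E)) - c * E + (1 + c) * E * log (1 / (1 - 1 / L)))) := by
        gcongr
    _ ≤ _ := by
        rw [hlogT]
        field_simp
        linarith [mul_nonneg hcross hE0.le]
end
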